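/- On ℂ[x], with Δ, ∇, x̂, H = −x̂∘∇ as in the discrete setting, R ∈ ℂ[X] of degree d, G = R(H)∘Δ, q ∈ ℂ[X] with q(0) = 0 and deg q = l ≥ 1, and P_n^q = e^{q(G)}((x)_n) (with the convention P_m^q = 0 for m < 0): the polynomials P_n^q satisfy a finite-term recurrence relation; namely for every n ∈ ℕ there exist complex constants γ_0(n), …, γ_m(n), independent of x, such that x·P_n^q = P_{n+1}^q + Σ_{j=0}^{m} γ_j(n)·P_{n−j}^q, where m = ld + l − 1 when d ≥ 1 and m = l when d = 0. -/

import Mathlib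

open Polynomial Finset

noncomputable section

/-- `E` is the ℂ-algebra of ℂ-linear endomorphisms of `ℂ[x]`. -/
abbrev E := Module.End ℂ (Polynomial ℂ)

/-- `D`: the shift `p(x) ↦ p(x+1)`. -/
def Dop : E := (aeval (X + 1 : Polynomial ℂ)).toLinearMap

/-- `D⁻¹`: the shift `p(x) ↦ p(x−1)`. -/
def Dinv : E := (aeval (X - 1 : Polynomial ℂ)).toLinearMap

/-- `Δ = D − 1`. -/
def Del : E := Dop - 1

/-- `∇ = D⁻¹ − 1`. -/
def Nab : E := Dinv - 1

/-- `x̂`: multiplication by `x`. -/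
def Xop : E := LinearMap.mulLeft ℂ (X : Polynomial ℂ)

/-- `H = −x̂∘∇`. -/
def Hd : E := -(Xop * Nab)

/-- `G = R(H)∘Δ`. -/
def Gd (R : Polynomial ℂ) : E := aeval Hd R * Del

/-- `P_n^q = e^{q(G)}((x)_n)`, the exponential series being a finite sum
(all terms with `j > n` vanish). -/
def Pqd (R q : Polynomial ℂ) (n : ℕ) : Polynomial ℂ :=
  ∑ j ∈ range (n + 1), (j.factorial : ℂ)⁻¹ • ((aeval (Gd R) q) ^ j) (descPochhammer ℂ n)

/-- `P_m^q` extended to integer indices by `P_m^q = 0` for `m < 0`. -/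
def Pqdz (R q : Polynomial ℂ) (m : ℤ) : Polynomial ℂ :=
  if m < 0 then 0 else Pqd R q m.toNat

/-!
The falling factorials `(x)_n` diagonalise `H`, with `H (x)_n = n (x)_n`, and `G` lowers them,
`G (x)_{n+1} = (n+1) R(n) (x)_n`; hence `G^s c(H) = c(H+s) G^s`. With `A = q(G)` and
`ad_{-A} T = T A - A T`, the identity `x̂ e^A = e^A ∑_k ad_{-A}^k(x̂) / k!` reduces the recurrence
to the operators `ad_{-A}^k(x̂)`, `k ≥ 1`. Each of them is a combination of normal-ordered
operators `c(H) G^s` with `l deg c + s ≤ m`: the commutator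
`[c(H) G^s, G^i] = (c(H) - c(H+i)) G^{s+i}` with `i ≤ l` trades one degree of `c` for at most
`l` powers of `G`, and since `deg c ≤ d` for `k = 1` the series stops after `k = d + 1`. Applied
to `(x)_n`, such an operator lands in the span of `(x)_{n-m}, …, (x)_n`, which `e^A` maps to the
span of `P_{n-m}, …, P_n`. As `A` is only locally nilpotent, `e^A` is handled through its
truncations, which agree with it on `(x)_r` as soon as they contain the term `A^r / r!`.
-/

open scoped Nat

section TruncatedExp
variable {R 𝒜 : Type*} [CommRing R] [Ring 𝒜] [Algebra R 𝒜]

variable (R) in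
def adRight (a : 𝒜) : Module.End R 𝒜 := LinearMap.mulRight R a - LinearMap.mulLeft R a

@[simp]
theorem adRight_apply (a t : 𝒜) : adRight R a t = t * a - a * t := rfl

theorem adRight_aeval (t x : 𝒜) (q : R[X]) :
    adRight R (aeval x q) t =
      ∑ i ∈ range (q.natDegree + 1), q.coeff i • (t * x ^ i - x ^ i * t) := by
  simp only [adRight_apply, aeval_eq_sum_range, Finset.mul_sum, Finset.sum_mul,
    ← Finset.sum_sub_distrib, mul_smul_comm, smul_mul_assoc, smul_sub]

theorem mul_pow_eq_sum_choose_smul_adRight (t a : 𝒜) (n : ℕ) :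
    t * a ^ n = ∑ k ∈ range (n + 1), n.choose k • (a ^ (n - k) * (adRight R a ^ k) t) := by
  have hcomm : Commute (adRight R a) (LinearMap.mulLeft R a) :=
    (LinearMap.commute_mulLeft_right a a).symm.sub_left (Commute.refl _)
  have hsplit : adRight R a + LinearMap.mulLeft R a = LinearMap.mulRight R a := sub_add_cancel _ _
  have hbinom := congrArg (fun f : Module.End R 𝒜 => f t) (hcomm.add_pow' n)
  simp only [hsplit, LinearMap.pow_mulRight, LinearMap.mulRight_apply,
    Nat.sum_antidiagonal_eq_sum_range_succ
      (fun i j => n.choose i • (adRight R a ^ i * LinearMap.mulLeft R a ^ j))] at hbinom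
  rw [hbinom, LinearMap.sum_apply]
  refine Finset.sum_congr rfl fun k _ => ?_
  rw [LinearMap.smul_apply, (hcomm.pow_pow k (n - k)).eq, LinearMap.pow_mulLeft,
    Module.End.mul_apply, LinearMap.mulLeft_apply]

variable (𝕜 : Type*) [Field 𝕜] [CharZero 𝕜] [Algebra 𝕜 𝒜]

def truncExp (N : ℕ) (a : 𝒜) : 𝒜 := ∑ j ∈ range N, (j ! : 𝕜)⁻¹ • a ^ j

theorem mul_truncExp (t a : 𝒜) (N : ℕ) :
    t * truncExp 𝕜 N a =
      ∑ k ∈ range N, (k ! : 𝕜)⁻¹ • (truncExp 𝕜 (N - k) a * (adRight 𝕜 a ^ k) t) := by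
  have hterm : ∀ n, (n ! : 𝕜)⁻¹ • (t * a ^ n) = ∑ k ∈ range (n + 1),
      (k ! : 𝕜)⁻¹ • (((n - k) ! : 𝕜)⁻¹ • a ^ (n - k) * (adRight 𝕜 a ^ k) t) := by
    intro n
    rw [mul_pow_eq_sum_choose_smul_adRight (R := 𝕜), Finset.smul_sum]
    refine Finset.sum_congr rfl fun k hk => ?_
    have hkn : k ≤ n := Nat.lt_succ_iff.mp (Finset.mem_range.mp hk)
    have hn : (n ! : 𝕜) ≠ 0 := Nat.cast_ne_zero.mpr n.factorial_ne_zero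
    rw [smul_mul_assoc, smul_smul, ← Nat.cast_smul_eq_nsmul 𝕜, smul_smul, Nat.cast_choose 𝕜 hkn]
    congr 1
    field_simp
  simp only [truncExp, Finset.mul_sum, mul_smul_comm, hterm, Finset.smul_sum, Finset.sum_mul,
    smul_mul_assoc]
  exact Finset.sum_range_diag_flip N
    fun k j => (k ! : 𝕜)⁻¹ • ((j ! : 𝕜)⁻¹ • (a ^ j * (adRight 𝕜 a ^ k) t))

end TruncatedExp

theorem natDegree_sub_taylor_lt {K : Type*} [CommRing K] {c : K[X]} (a : K)
    (h : c - taylor a c ≠ 0) : (c - taylor a c).natDegree < c.natDegree :=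
  natDegree_lt_natDegree h <| degree_sub_lt_left (degree_taylor c a).symm
    (fun hc => h (by simp [hc])) (leadingCoeff_taylor a c).symm

theorem LinearMap.ext_descPochhammer {K M : Type*} [CommRing K] [IsDomain K] [AddCommMonoid M]
    [Module K M] {f g : K[X] →ₗ[K] M} (h : ∀ n, f (descPochhammer K n) = g (descPochhammer K n)) :
    f = g := by
  let S : Polynomial.Sequence K := ⟨descPochhammer K, fun n => by
    rw [degree_eq_natDegree (monic_descPochhammer K n).ne_zero, descPochhammer_natDegree]⟩
  refine LinearMap.ext_on_range (S.span fun n => ?_) h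
  simp [S, (monic_descPochhammer K n).leadingCoeff]

theorem X_mul_descPochhammer {K : Type*} [CommRing K] (n : ℕ) :
    X * descPochhammer K n = descPochhammer K (n + 1) + (n : K) • descPochhammer K n := by
  rw [descPochhammer_succ_right, smul_eq_C_mul, C_eq_natCast]
  ring

local notation "𝔢" => descPochhammer ℂ

theorem Xop_descPochhammer (n : ℕ) : Xop (𝔢 n) = 𝔢 (n + 1) + (n : ℂ) • 𝔢 n :=
  X_mul_descPochhammer n

theorem Del_descPochhammer_zero : Del (𝔢 0) = 0 := by
  simp [Del, Dop]

theorem Del_descPochhammer_succ (n : ℕ) : Del (𝔢 (n + 1)) = ((n : ℂ) + 1) • 𝔢 n := by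
  have hshift : (𝔢 (n + 1)).comp (X + 1) = (X + 1) * 𝔢 n := by
    rw [descPochhammer_succ_left, mul_comp, X_comp, comp_assoc]
    simp
  change (𝔢 (n + 1)).comp (X + 1) - 𝔢 (n + 1) = _
  rw [hshift, descPochhammer_succ_right, smul_eq_C_mul]
  simp only [C_add, C_1, C_eq_natCast]
  ring

theorem Hd_descPochhammer (n : ℕ) : Hd (𝔢 n) = (n : ℂ) • 𝔢 n := by
  change -(X * ((𝔢 n).comp (X - 1) - 𝔢 n)) = _
  rw [mul_sub, ← descPochhammer_succ_left, X_mul_descPochhammer]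
  abel

theorem aeval_Hd_descPochhammer (c : ℂ[X]) (n : ℕ) :
    aeval Hd c (𝔢 n) = c.eval (n : ℂ) • 𝔢 n :=
  Module.End.aeval_apply_of_hasEigenvector
    ⟨Module.End.mem_eigenspace_iff.mpr (Hd_descPochhammer n), (monic_descPochhammer ℂ n).ne_zero⟩

theorem aeval_Hd_mem_span_descPochhammer (c : ℂ[X]) (I : Set ℕ) {p : ℂ[X]}
    (hp : p ∈ Submodule.span ℂ (𝔢 '' I)) : aeval Hd c p ∈ Submodule.span ℂ (𝔢 '' I) := by
  refine (Submodule.map_span_le _ _ _).mpr ?_ (Submodule.mem_map_of_mem hp)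
  rintro _ ⟨i, hi, rfl⟩
  rw [aeval_Hd_descPochhammer]
  exact Submodule.smul_mem _ _ (Submodule.subset_span ⟨i, hi, rfl⟩)

def gdWeight (R : ℂ[X]) : ℂ[X] := X * R.comp (X - 1)

section Gd
variable (R : ℂ[X])

theorem natDegree_gdWeight_le {d : ℕ} (hR : R.natDegree ≤ d) :
    (gdWeight R).natDegree ≤ d + 1 := by
  refine natDegree_mul_le.trans ?_
  have hX : (X - 1 : ℂ[X]).natDegree = 1 := by simpa using natDegree_X_sub_C (1 : ℂ)
  rw [natDegree_X, natDegree_comp, hX, mul_one]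
  omega

theorem Gd_descPochhammer_zero : Gd R (𝔢 0) = 0 := by
  rw [Gd, Module.End.mul_apply, Del_descPochhammer_zero, map_zero]

theorem Gd_descPochhammer_succ (n : ℕ) :
    Gd R (𝔢 (n + 1)) = (gdWeight R).eval ((n : ℂ) + 1) • 𝔢 n := by
  rw [Gd, Module.End.mul_apply, Del_descPochhammer_succ, map_smul, aeval_Hd_descPochhammer,
    smul_smul, gdWeight, eval_mul, eval_comp]
  simp

theorem Gd_pow_descPochhammer_mem (s n : ℕ) :
    (Gd R ^ s) (𝔢 n) ∈ Submodule.span ℂ (𝔢 '' {i | i + s = n}) := by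
  induction s generalizing n with
  | zero => exact Submodule.subset_span ⟨n, rfl, rfl⟩
  | succ s ih =>
    rw [pow_succ, Module.End.mul_apply]
    rcases n with _ | n
    · rw [Gd_descPochhammer_zero, map_zero]
      exact Submodule.zero_mem _
    · rw [Gd_descPochhammer_succ, map_smul]
      refine Submodule.smul_mem _ _ (Submodule.span_mono (Set.image_mono ?_) (ih n))
      intro i hi
      simp only [Set.mem_ofPred_eq] at hi ⊢
      omega

theorem Gd_mul_aeval_Hd (c : ℂ[X]) : Gd R * aeval Hd c = aeval Hd (taylor 1 c) * Gd R := by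
  refine LinearMap.ext_descPochhammer fun n => ?_
  simp only [Module.End.mul_apply, aeval_Hd_descPochhammer, map_smul]
  rcases n with _ | n
  · rw [Gd_descPochhammer_zero, smul_zero, map_zero]
  · rw [Gd_descPochhammer_succ, map_smul, aeval_Hd_descPochhammer, smul_smul, smul_smul,
      taylor_eval]
    push_cast
    ring_nf

theorem Gd_pow_mul_aeval_Hd (s : ℕ) (c : ℂ[X]) :
    Gd R ^ s * aeval Hd c = aeval Hd (taylor (s : ℂ) c) * Gd R ^ s := by
  induction s generalizing c with
  | zero => simp
  | succ s ih =>
    rw [pow_succ, mul_assoc, Gd_mul_aeval_Hd, ← mul_assoc, ih, mul_assoc, taylor_taylor]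
    push_cast
    ring_nf

theorem Xop_mul_Gd_sub_Gd_mul_Xop :
    Xop * Gd R - Gd R * Xop = aeval Hd (gdWeight R - taylor 1 (gdWeight R)) - Gd R := by
  refine LinearMap.ext_descPochhammer fun n => ?_
  simp only [LinearMap.sub_apply, Module.End.mul_apply, aeval_Hd_descPochhammer,
    Xop_descPochhammer, map_add, map_smul]
  rcases n with _ | n
  · simp only [Gd_descPochhammer_zero, map_zero, zero_add, Gd_descPochhammer_succ, Nat.cast_zero,
      smul_zero, eval_sub, taylor_eval, gdWeight, eval_mul, eval_X, zero_mul]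
    module
  · simp only [Gd_descPochhammer_succ, map_smul, Xop_descPochhammer, eval_sub, taylor_eval]
    push_cast
    module

theorem Xop_mul_Gd_pow_sub_Gd_pow_mul_Xop (t : ℕ) :
    Xop * Gd R ^ (t + 1) - Gd R ^ (t + 1) * Xop =
      aeval Hd (gdWeight R - taylor ((t : ℂ) + 1) (gdWeight R)) * Gd R ^ t
        - ((t : ℂ) + 1) • Gd R ^ (t + 1) := by
  induction t with
  | zero => simpa using Xop_mul_Gd_sub_Gd_mul_Xop R
  | succ t ih =>
    have hleibniz : Xop * Gd R ^ (t + 1 + 1) - Gd R ^ (t + 1 + 1) * Xop =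
        (Xop * Gd R ^ (t + 1) - Gd R ^ (t + 1) * Xop) * Gd R
          + Gd R ^ (t + 1) * (Xop * Gd R - Gd R * Xop) := by
      simp only [pow_succ (Gd R) (t + 1), sub_mul, mul_sub, mul_assoc]
      abel
    have htaylor : gdWeight R - taylor ((↑(t + 1) : ℂ) + 1) (gdWeight R) =
        (gdWeight R - taylor ((t : ℂ) + 1) (gdWeight R))
          + taylor ((↑(t + 1) : ℂ)) (gdWeight R - taylor 1 (gdWeight R)) := by
      rw [map_sub, taylor_taylor]
      push_cast
      ring_nf
    rw [hleibniz, ih, Xop_mul_Gd_sub_Gd_mul_Xop, mul_sub, Gd_pow_mul_aeval_Hd, htaylor, map_add,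
      add_mul, pow_succ (Gd R) (t + 1)]
    simp only [sub_mul, mul_assoc, smul_mul_assoc, ← pow_succ]
    push_cast
    module

end Gd

section NormalOrdered
variable (R : ℂ[X]) (l m : ℕ)

-- The bound `deg c < b` is strict so that level `0` is trivial: `b` commutators with `A` kill it.
def normalOrderedSpan (b : ℕ) : Submodule ℂ E :=
  Submodule.span ℂ {T | ∃ (c : ℂ[X]) (s : ℕ),
    c.natDegree < b ∧ l * c.natDegree + s ≤ m ∧ T = aeval Hd c * Gd R ^ s}

variable {R l m}

theorem aeval_Hd_mul_Gd_pow_mem {b : ℕ} {c : ℂ[X]} {s : ℕ} (hc : c.natDegree < b)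
    (hs : l * c.natDegree + s ≤ m) : aeval Hd c * Gd R ^ s ∈ normalOrderedSpan R l m b :=
  Submodule.subset_span ⟨c, s, hc, hs, rfl⟩

theorem normalOrderedSpan_zero : normalOrderedSpan R l m 0 = ⊥ :=
  Submodule.span_eq_bot.mpr fun _ ⟨_, _, hc, _⟩ => absurd hc (Nat.not_lt_zero _)

theorem normalOrderedSpan_apply_mem {b : ℕ} {T : E} (hT : T ∈ normalOrderedSpan R l m b)
    (n : ℕ) : T (𝔢 n) ∈ Submodule.span ℂ (𝔢 '' Set.Icc (n - m) n) := by
  refine (Submodule.map_span_le (LinearMap.applyₗ (𝔢 n)) _ _).mpr ?_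
    (Submodule.mem_map_of_mem (f := LinearMap.applyₗ (𝔢 n)) hT)
  rintro _ ⟨c, s, -, hs, rfl⟩
  refine aeval_Hd_mem_span_descPochhammer c _ <|
    Submodule.span_mono (Set.image_mono ?_) (Gd_pow_descPochhammer_mem R s n)
  intro i hi
  simp only [Set.mem_ofPred_eq, Set.mem_Icc] at hi ⊢
  omega

theorem adRight_mem_normalOrderedSpan {q : ℂ[X]} (hq : q.natDegree ≤ l) {b : ℕ} {T : E}
    (hT : T ∈ normalOrderedSpan R l m b) :
    adRight ℂ (aeval (Gd R) q) T ∈ normalOrderedSpan R l m (b - 1) := by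
  refine (Submodule.map_span_le _ _ _).mpr ?_ (Submodule.mem_map_of_mem hT)
  rintro _ ⟨c, s, hc, hs, rfl⟩
  rw [adRight_aeval]
  refine Submodule.sum_mem _ fun i hi => Submodule.smul_mem _ _ ?_
  have hcomm : aeval Hd c * Gd R ^ s * Gd R ^ i - Gd R ^ i * (aeval Hd c * Gd R ^ s) =
      aeval Hd (c - taylor (i : ℂ) c) * Gd R ^ (s + i) := by
    rw [← mul_assoc, Gd_pow_mul_aeval_Hd, map_sub, sub_mul, mul_assoc, mul_assoc, ← pow_add,
      ← pow_add, add_comm i]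
  rw [hcomm]
  by_cases h0 : c - taylor (i : ℂ) c = 0
  · rw [h0, map_zero, zero_mul]
    exact Submodule.zero_mem _
  have hlt := natDegree_sub_taylor_lt (i : ℂ) h0
  have hil : i ≤ l := by have := Finset.mem_range.mp hi; omega
  have hweight := Nat.mul_le_mul_left l (Nat.succ_le_of_lt hlt)
  rw [Nat.mul_succ] at hweight
  exact aeval_Hd_mul_Gd_pow_mem (by omega) (by omega)

theorem adRight_pow_mem_normalOrderedSpan {q : ℂ[X]} (hq : q.natDegree ≤ l) {b : ℕ} {T : E}
    (hT : T ∈ normalOrderedSpan R l m b) (k : ℕ) :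
    (adRight ℂ (aeval (Gd R) q) ^ k) T ∈ normalOrderedSpan R l m (b - k) := by
  induction k with
  | zero => simpa using hT
  | succ k ih =>
    rw [pow_succ', Module.End.mul_apply, ← Nat.sub_sub]
    exact adRight_mem_normalOrderedSpan hq ih

theorem adRight_Xop_mem_normalOrderedSpan {d : ℕ} (hR : R.natDegree ≤ d) {q : ℂ[X]}
    (hq : q.natDegree ≤ l) (hlm : l ≤ m) (hdm : l * d + l - 1 ≤ m) :
    adRight ℂ (aeval (Gd R) q) Xop ∈ normalOrderedSpan R l m (d + 1) := by
  rw [adRight_aeval]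
  refine Submodule.sum_mem _ fun i hi => Submodule.smul_mem _ _ ?_
  have hil : i ≤ l := by have := Finset.mem_range.mp hi; omega
  rcases i with _ | t
  · simp
  rw [Xop_mul_Gd_pow_sub_Gd_pow_mul_Xop]
  refine Submodule.sub_mem _ ?_ (Submodule.smul_mem _ _ ?_)
  · have hc : (gdWeight R - taylor ((t : ℂ) + 1) (gdWeight R)).natDegree ≤ d := by
      by_cases h0 : gdWeight R - taylor ((t : ℂ) + 1) (gdWeight R) = 0
      · simp [h0]
      have := natDegree_sub_taylor_lt _ h0
      have := natDegree_gdWeight_le R hR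
      omega
    have := Nat.mul_le_mul_left l hc
    exact aeval_Hd_mul_Gd_pow_mem (by omega) (by omega)
  · simpa using aeval_Hd_mul_Gd_pow_mem (R := R) (c := 1) (s := t + 1) (b := d + 1)
      (by simp) (by simp; omega)

end NormalOrdered

section Exponential
variable {R q : ℂ[X]}

theorem aeval_Gd_descPochhammer_mem (hq0 : q.eval 0 = 0) (r : ℕ) :
    aeval (Gd R) q (𝔢 r) ∈ Submodule.span ℂ (𝔢 '' Set.Iio r) := by
  rw [aeval_eq_sum_range, LinearMap.sum_apply]
  refine Submodule.sum_mem _ fun i _ => ?_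
  rcases i with _ | t
  · simp [coeff_zero_eq_eval_zero, hq0]
  refine Submodule.smul_mem _ _ (Submodule.span_mono (Set.image_mono ?_)
    (Gd_pow_descPochhammer_mem R (t + 1) r))
  intro i hi
  simp only [Set.mem_ofPred_eq, Set.mem_Iio] at hi ⊢
  omega

theorem aeval_Gd_pow_descPochhammer_eq_zero (hq0 : q.eval 0 = 0) {j r : ℕ} (h : r < j) :
    (aeval (Gd R) q ^ j) (𝔢 r) = 0 := by
  suffices ∀ j, ∀ p ∈ Submodule.span ℂ (𝔢 '' Set.Iio j), (aeval (Gd R) q ^ j) p = 0 from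
    this j _ (Submodule.subset_span ⟨r, h, rfl⟩)
  intro j
  induction j with
  | zero => simp
  | succ j ih =>
    intro p hp
    rw [pow_succ, Module.End.mul_apply]
    refine ih _ ((Submodule.map_span_le _ _ _).mpr ?_ (Submodule.mem_map_of_mem hp))
    rintro _ ⟨i, hi, rfl⟩
    exact Submodule.span_mono (Set.image_mono (Set.Iio_subset_Iio (Nat.lt_succ_iff.mp hi)))
      (aeval_Gd_descPochhammer_mem hq0 i)

theorem Pqd_eq_truncExp (hq0 : q.eval 0 = 0) {r N : ℕ} (h : r < N) :
    Pqd R q r = truncExp ℂ N (aeval (Gd R) q) (𝔢 r) := by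
  rw [Pqd, truncExp, LinearMap.sum_apply]
  refine Finset.sum_subset (Finset.range_subset_range.mpr h) fun j _ hj => ?_
  rw [aeval_Gd_pow_descPochhammer_eq_zero hq0 (by simpa using hj), smul_zero]

theorem truncExp_mem_span_Pqd (hq0 : q.eval 0 = 0) {a b N : ℕ} (hb : b < N) {p : ℂ[X]}
    (hp : p ∈ Submodule.span ℂ (𝔢 '' Set.Icc a b)) :
    truncExp ℂ N (aeval (Gd R) q) p ∈ Submodule.span ℂ (Pqd R q '' Set.Icc a b) := by
  refine (Submodule.map_span_le _ _ _).mpr ?_ (Submodule.mem_map_of_mem hp)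
  rintro _ ⟨i, hi, rfl⟩
  rw [← Pqd_eq_truncExp hq0 (hi.2.trans_lt hb)]
  exact Submodule.subset_span ⟨i, hi, rfl⟩

theorem X_mul_Pqd_eq (hq0 : q.eval 0 = 0) {n N : ℕ} (hN : n < N) :
    X * Pqd R q n = Pqd R q (n + 1) + (n : ℂ) • Pqd R q n +
      ∑ k ∈ range N, ((k + 1)! : ℂ)⁻¹ • truncExp ℂ (N - k) (aeval (Gd R) q)
        ((adRight ℂ (aeval (Gd R) q) ^ (k + 1)) Xop (𝔢 n)) := by
  rw [Pqd_eq_truncExp hq0 (show n < N + 1 by omega),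
    Pqd_eq_truncExp hq0 (show n + 1 < N + 1 by omega)]
  change (Xop * truncExp ℂ (N + 1) (aeval (Gd R) q)) (𝔢 n) = _
  rw [mul_truncExp, Finset.sum_range_succ', add_comm]
  simp only [LinearMap.add_apply, LinearMap.sum_apply, LinearMap.smul_apply,
    Module.End.mul_apply, pow_zero, Module.End.one_apply, Nat.factorial_zero, Nat.cast_one,
    inv_one, one_smul, Nat.sub_zero, Nat.add_sub_add_right, Xop_descPochhammer, map_add,
    map_smul]

theorem X_mul_Pqd_sub_mem_span {d l m : ℕ} (hR : R.natDegree ≤ d) (hq0 : q.eval 0 = 0)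
    (hq : q.natDegree ≤ l) (hlm : l ≤ m) (hdm : l * d + l - 1 ≤ m) (n : ℕ) :
    X * Pqd R q n - Pqd R q (n + 1) ∈ Submodule.span ℂ (Pqd R q '' Set.Icc (n - m) n) := by
  rw [X_mul_Pqd_eq hq0 (show n < n + d + 1 by omega), add_assoc, add_sub_cancel_left]
  refine Submodule.add_mem _
    (Submodule.smul_mem _ _ (Submodule.subset_span ⟨n, ⟨Nat.sub_le n m, le_rfl⟩, rfl⟩))
    (Submodule.sum_mem _ fun k _ => Submodule.smul_mem _ _ ?_)
  have hmem := adRight_pow_mem_normalOrderedSpan hq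
    (adRight_Xop_mem_normalOrderedSpan hR hq hlm hdm) k
  rw [← Module.End.mul_apply, ← pow_succ] at hmem
  rcases Nat.lt_or_ge d k with hdk | hkd
  · rw [show d + 1 - k = 0 by omega, normalOrderedSpan_zero, Submodule.mem_bot] at hmem
    rw [hmem, LinearMap.zero_apply, map_zero]
    exact Submodule.zero_mem _
  · exact truncExp_mem_span_Pqd hq0 (by omega) (normalOrderedSpan_apply_mem hmem n)

end Exponential

theorem Pqdz_natCast (R q : ℂ[X]) (n : ℕ) : Pqdz R q n = Pqd R q n := by
  simp [Pqdz]

theorem Pqd_recurrence_general (R : Polynomial ℂ) (d : ℕ) (hR : R.natDegree = d)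
    (q : Polynomial ℂ) (hq0 : q.eval 0 = 0) (l : ℕ)
    (hql : q.natDegree = l) (n : ℕ) :
    ∃ γ : ℕ → ℂ,
      X * Pqdz R q n = Pqdz R q (n + 1)
        + ∑ j ∈ range ((if d = 0 then l else l * d + l - 1) + 1),
            γ j • Pqdz R q ((n : ℤ) - j) := by
  set m := if d = 0 then l else l * d + l - 1
  obtain ⟨hlm, hdm⟩ : l ≤ m ∧ l * d + l - 1 ≤ m := by
    rcases Nat.eq_zero_or_pos d with rfl | hd
    · simp [m]
    · have := Nat.le_mul_of_pos_right l hd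
      simp only [m, if_neg hd.ne']
      omega
  have hwindow : Pqd R q '' Set.Icc (n - m) n ⊆
      (fun j : ℕ => Pqdz R q (n - j)) '' ↑(range (m + 1)) := by
    rintro _ ⟨i, ⟨hmi, hin⟩, rfl⟩
    refine ⟨n - i, by simp only [coe_range, Set.mem_Iio]; omega, ?_⟩
    simp only [Nat.cast_sub hin, sub_sub_cancel, Pqdz_natCast]
  obtain ⟨γ, hγ⟩ := (Submodule.mem_span_image_finset_iff_exists_fun' ℂ).mp
    (Submodule.span_mono hwindow (X_mul_Pqd_sub_mem_span hR.le hq0 hql.le hlm hdm n))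
  refine ⟨γ, ?_⟩
  rw [hγ, Pqdz_natCast, ← Nat.cast_succ, Pqdz_natCast]
  abel

/-- Finite-term recurrence `x·P_n^q = P_{n+1}^q + Σ_{j=0}^{m} γ_j(n)·P_{n−j}^q`,
where `m = ld+l−1` if `d ≥ 1` and `m = l` if `d = 0`. -/
theorem Pqd_recurrence (R : Polynomial ℂ) (d : ℕ) (hR : R.natDegree = d)
    (q : Polynomial ℂ) (hq0 : q.eval 0 = 0) (l : ℕ) (hl : 1 ≤ l)
    (hql : q.natDegree = l) (n : ℕ) :
    ∃ γ : ℕ → ℂ,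
      X * Pqdz R q n = Pqdz R q (n + 1)
        + ∑ j ∈ range ((if d = 0 then l else l * d + l - 1) + 1),
            γ j • Pqdz R q ((n : ℤ) - j) :=
  Pqd_recurrence_general R d hR q hq0 l hql n
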